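/- Let G = (B,E) be a graph on n vertices and k ≤ n. In the deleting-candidates destructive-control construction (candidates {c,w} ∪ B ∪ X ∪ Y ∪ Z with ‖X‖ = n² − Σ_i ‖N_c[b_i]‖, ‖Y‖ = n−1, ‖Z‖ = n−2, and 2n+1 voters: for each i one voter approving N_c[b_i] then a block X_i of n − ‖N_c[b_i]‖ fresh X-candidates then w; n voters approving Y then c; one voter approving Z then w then c), G has a dominating set of size at most k if and only if c can be prevented from being the unique fallback voting winner by deleting at most k candidates other than c. -/

import Mathlib

/- Fallback voting framework.  A ballot is the linearly ordered list of a voter's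
approved candidates (most preferred first); an election is a list of ballots. -/
namespace FV

variable {α : Type*} [DecidableEq α]

/-- The level-`i` score of candidate `c`: the number of voters who approve `c`
and rank `c` among their top `i` approved candidates. -/
def levelScore (V : List (List α)) (i : ℕ) (c : α) : ℕ :=
  (V.filter (fun b => decide (c ∈ b.take i))).length

/-- The overall approval score of candidate `c`. -/
def score (V : List (List α)) (c : α) : ℕ :=
  (V.filter (fun b => decide (c ∈ b))).length

/-- `c` has a strict majority of approvals at level `i`. -/
def MajAt (V : List (List α)) (i : ℕ) (c : α) : Prop :=
  2 * levelScore V i c > V.length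

/-- `c` is a fallback voting winner of the election with candidate set `Cs`
and voter list `V`:  either at the first level (up to `‖Cs‖`) at which some
candidate attains a strict majority, `c` has a strict majority and maximal
level score among strict-majority candidates; or no candidate ever attains a
strict majority and `c` has maximal overall approval score. -/
def FVWinner (Cs : Finset α) (V : List (List α)) (c : α) : Prop :=
  c ∈ Cs ∧
    ((∃ i, 1 ≤ i ∧ i ≤ Cs.card ∧ MajAt V i c ∧
        (∀ j, j < i → ∀ d ∈ Cs, ¬ MajAt V j d) ∧
        (∀ d ∈ Cs, MajAt V i d → levelScore V i d ≤ levelScore V i c)) ∨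
     ((∀ i, i ≤ Cs.card → ∀ d ∈ Cs, ¬ MajAt V i d) ∧
        ∀ d ∈ Cs, score V d ≤ score V c))

/-- `c` is the unique fallback voting winner. -/
def UniqueFVWinner (Cs : Finset α) (V : List (List α)) (c : α) : Prop :=
  FVWinner Cs V c ∧ ∀ d, FVWinner Cs V d → d = c

end FV

/- The deleting-candidates constructions.  Candidates: `{c,w} ∪ B ∪ X ∪ Y ∪ Z`
where `B` are the vertices of `G`, `X` is partitioned into blocks `Xᵢ` with
`‖N_c[bᵢ]‖ + ‖Xᵢ‖ = n` (so `‖X‖ = n² − Σᵢ ‖N_c[bᵢ]‖`), `‖Y‖ = n-1` and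
`‖Z‖ = n-2`.  `A i` enumerates the closed neighborhood `N_c[bᵢ]`.  Deleting a
candidate set `D` restricts every ballot to the remaining candidates. -/
namespace DC

variable {n : ℕ} (G : SimpleGraph (Fin n)) [DecidableRel G.Adj]

/-- The closed neighborhood of `i` in `G`, as a finset. -/
def ncl (i : Fin n) : Finset (Fin n) :=
  Finset.univ.filter (fun b => b = i ∨ G.Adj i b)

/-- Candidates: vertex candidates, the `X`-blocks, `Y`, `Z`, and `c`,`w`
(`Sum.inr … false` is `c`, `Sum.inr … true` is `w`). -/
abbrev Cand :=
  Sum (Fin n) (Sum ((i : Fin n) × Fin (n - (ncl G i).card))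
    (Sum (Fin (n - 1)) (Sum (Fin (n - 2)) Bool)))

def bC (b : Fin n) : Cand G := Sum.inl b
def xC (p : (i : Fin n) × Fin (n - (ncl G i).card)) : Cand G := Sum.inr (Sum.inl p)
def yC (j : Fin (n - 1)) : Cand G := Sum.inr (Sum.inr (Sum.inl j))
def zC (j : Fin (n - 2)) : Cand G := Sum.inr (Sum.inr (Sum.inr (Sum.inl j)))
def cC : Cand G := Sum.inr (Sum.inr (Sum.inr (Sum.inr false)))
def wC : Cand G := Sum.inr (Sum.inr (Sum.inr (Sum.inr true)))

/-- The block `Xᵢ`, in order. -/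
def Xlist (i : Fin n) : List (Cand G) :=
  (List.finRange (n - (ncl G i).card)).map (fun j => xC G ⟨i, j⟩)

def Ylist : List (Cand G) := (List.finRange (n - 1)).map (yC G)
def Zlist : List (Cand G) := (List.finRange (n - 2)).map (zC G)

/-- The first-group ballot of voter `i`: `N_c[bᵢ]` (in the order `A i`), then
the block `Xᵢ`, then `w`. -/
def ballot1 (A : Fin n → List (Fin n)) (i : Fin n) : List (Cand G) :=
  ((A i).map (bC G)) ++ Xlist G i ++ [wC G]

/-- Restricting a ballot after deleting the candidates in `D`. -/
def restrict (D : Finset (Cand G)) (b : List (Cand G)) : List (Cand G) :=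
  b.filter (fun a => decide (a ∉ D))

end DC

namespace DC

/-- The `2n+1` voters of the destructive deleting-candidates construction:
for each `i` the first-group ballot; `n` voters approving `Y` then `c`; one
voter approving `Z` then `w` then `c`. -/
def electionD {n : ℕ} (G : SimpleGraph (Fin n)) [DecidableRel G.Adj]
    (A : Fin n → List (Fin n)) : List (List (Cand G)) :=
  (List.finRange n).map (ballot1 G A) ++
    List.replicate n (Ylist G ++ [cC G]) ++
    [Zlist G ++ [wC G, cC G]]

end DC

/-! After deleting a set `D ∌ c`, every candidate other than `c` and `w` is approved by at most
`n` of the `2n + 1` voters, so only `c` and `w` can reach a strict majority. Candidate `c` gets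
one, with all its `n + 1` voters, exactly from level `L ≤ n` on, where `L - 1` is the larger of
its (0-based) positions in the restricted `Y`- and `Z`-ballots. If `w` survives and every
first-group ballot `i` has lost one of the `n` candidates of `N_c[bᵢ] ∪ Xᵢ` ranked above `w`, then `w` has a majority, with level score `n + 1`, at every
level where `c` has one, so `c` is not the unique winner; otherwise `c` alone wins at level `L`.
A set `D` meeting every `N_c[bᵢ] ∪ Xᵢ` projects to a dominating set (`Xᵢ ↦ bᵢ`); conversely,
deleting the vertices of a dominating set does this while keeping `L = n`. -/

namespace FV

variable {α : Type*} [DecidableEq α]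

section Scores

variable (V V₁ V₂ : List (List α)) (b : List α) (i m : ℕ) (c : α)

lemma levelScore_append : levelScore (V₁ ++ V₂) i c = levelScore V₁ i c + levelScore V₂ i c := by
  simp [levelScore]

lemma levelScore_replicate :
    levelScore (List.replicate m b) i c = if c ∈ b.take i then m else 0 := by
  simp only [levelScore, List.filter_replicate, decide_eq_true_eq]
  split_ifs <;> simp

lemma levelScore_singleton : levelScore [b] i c = if c ∈ b.take i then 1 else 0 := by
  simpa using levelScore_replicate b i 1 c

lemma levelScore_le_length : levelScore V i c ≤ V.length :=
  List.length_filter_le _ _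

lemma levelScore_eq_length_iff : levelScore V i c = V.length ↔ ∀ b ∈ V, c ∈ b.take i := by
  simp [levelScore]

lemma levelScore_eq_zero_iff : levelScore V i c = 0 ↔ ∀ b ∈ V, c ∉ b.take i := by
  simp [levelScore]

lemma levelScore_le_score : levelScore V i c ≤ score V c :=
  List.Sublist.length_le <| List.monotone_filter_right _ fun b h => by
    simpa using List.mem_of_mem_take (by simpa using h)

lemma score_append : score (V₁ ++ V₂) c = score V₁ c + score V₂ c := by
  simp [score]

lemma score_replicate : score (List.replicate m b) c = if c ∈ b then m else 0 := by
  simp only [score, List.filter_replicate, decide_eq_true_eq]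
  split_ifs <;> simp

lemma score_singleton : score [b] c = if c ∈ b then 1 else 0 := by
  simpa using score_replicate b 1 c

lemma score_le_length : score V c ≤ V.length :=
  List.length_filter_le _ _

lemma score_eq_zero_iff : score V c = 0 ↔ ∀ b ∈ V, c ∉ b := by
  simp [score]

lemma score_map_filter_le (p : α → Bool) : score (V.map (List.filter p)) c ≤ score V c := by
  simp only [score, ← List.countP_eq_length_filter, List.countP_map]
  exact List.countP_mono_left fun b _ h => by
    simp only [Function.comp_apply, decide_eq_true_eq, List.mem_filter] at h ⊢
    exact h.1

end Scores

section Winners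

variable {Cs : Finset α} {V : List (List α)} {c w : α}

theorem uniqueFVWinner_of_first_majority {L : ℕ} (hc : c ∈ Cs) (hL : 1 ≤ L)
    (hLCs : L ≤ Cs.card) (hmaj : MajAt V L c) (hbefore : ∀ j < L, ∀ d, ¬ MajAt V j d)
    (honly : ∀ d, MajAt V L d → d = c) : UniqueFVWinner Cs V c := by
  refine ⟨⟨hc, Or.inl ⟨L, hL, hLCs, hmaj, fun j hj d _ => hbefore j hj d,
    fun d _ hd => (honly d hd).symm ▸ le_rfl⟩⟩, ?_⟩
  rintro d ⟨-, ⟨i, -, -, hdi, hearly, -⟩ | ⟨hnone, -⟩⟩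
  · rcases lt_trichotomy i L with hiL | rfl | hLi
    · exact absurd hdi (hbefore i hiL d)
    · exact honly d hdi
    · exact absurd hmaj (hearly L hLi c hc)
  · exact absurd hmaj (hnone L hLCs c hc)

theorem not_uniqueFVWinner_of_ties {L : ℕ} (hw : w ∈ Cs) (hwc : w ≠ c)
    (hLCs : L ≤ Cs.card) (hmaj : MajAt V L c)
    (hties : ∀ i, MajAt V i c → MajAt V i w ∧ levelScore V i c ≤ levelScore V i w) :
    ¬ UniqueFVWinner Cs V c := by
  rintro ⟨⟨hc, ⟨i, hi, hiCs, hci, hearly, hbest⟩ | ⟨hnone, -⟩⟩, huniq⟩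
  · obtain ⟨hwi, hcw⟩ := hties i hci
    refine hwc (huniq w ⟨hw, Or.inl ⟨i, hi, hiCs, hwi, hearly, fun d hd hdi => ?_⟩⟩)
    exact (hbest d hd hdi).trans hcw
  · exact hnone L hLCs c hc hmaj

end Winners

end FV

lemma List.mem_take_append_cons_iff {α : Type*} [DecidableEq α] {a : α} {M : List α}
    (ha : a ∉ M) (L : List α) (i : ℕ) : a ∈ (M ++ a :: L).take i ↔ M.length < i := by
  rw [List.mem_take_iff_idxOf_lt (by simp), List.idxOf_append_of_notMem ha,
    List.idxOf_cons_self, add_zero]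

namespace DC

open FV

variable {n : ℕ} {G : SimpleGraph (Fin n)} [DecidableRel G.Adj]

section Restrict

variable (D : Finset (Cand G))

lemma mem_restrict {a : Cand G} {l : List (Cand G)} : a ∈ restrict G D l ↔ a ∈ l ∧ a ∉ D := by
  simp [restrict]

lemma restrict_append (l₁ l₂ : List (Cand G)) :
    restrict G D (l₁ ++ l₂) = restrict G D l₁ ++ restrict G D l₂ :=
  List.filter_append _ _

lemma restrict_cons_of_notMem {a : Cand G} (ha : a ∉ D) (l : List (Cand G)) :
    restrict G D (a :: l) = a :: restrict G D l := by
  simp [restrict, ha]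

lemma restrict_eq_self {l : List (Cand G)} (h : ∀ a ∈ l, a ∉ D) : restrict G D l = l :=
  List.filter_eq_self.2 fun a ha => by simpa using h a ha

end Restrict

variable (G) in
def ballotHead (A : Fin n → List (Fin n)) (j : Fin n) : List (Cand G) :=
  (A j).map (bC G) ++ Xlist G j

/- In the election restricted to `univ \ D`, `yLength D` and `zwLength D` are the (0-based)
positions of `c` in the `Y`- and `Z`-ballots, `zLength D` and `headLength A D j` those of `w` in
the `Z`-ballot and in the ballot of voter `j`. -/
def yLength (D : Finset (Cand G)) : ℕ := (restrict G D (Ylist G)).length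

def zLength (D : Finset (Cand G)) : ℕ := (restrict G D (Zlist G)).length

def zwLength (D : Finset (Cand G)) : ℕ := (restrict G D (Zlist G ++ [wC G])).length

def headLength (A : Fin n → List (Fin n)) (D : Finset (Cand G)) (j : Fin n) : ℕ :=
  (restrict G D (ballotHead G A j)).length

variable {A : Fin n → List (Fin n)} {D : Finset (Cand G)} {i : ℕ}

lemma yLength_le : yLength D ≤ n - 1 :=
  (List.length_filter_le _ _).trans (by simp [Ylist])

lemma zLength_le_zwLength : zLength D ≤ zwLength D := by
  simp [zLength, zwLength, restrict_append]

lemma zwLength_le (hn : 2 ≤ n) : zwLength D ≤ n - 1 :=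
  (List.length_filter_le _ _).trans (by simp [Zlist]; omega)

lemma wC_ne_cC : wC G ≠ cC G := by simp [wC, cC]

lemma cC_mem_take_yBallot (hc : cC G ∉ D) :
    cC G ∈ (restrict G D (Ylist G ++ [cC G])).take i ↔ yLength D < i := by
  rw [restrict_append, restrict_cons_of_notMem D hc]
  exact List.mem_take_append_cons_iff (by simp [mem_restrict, Ylist, yC, cC]) _ i

lemma cC_mem_take_zBallot (hc : cC G ∉ D) :
    cC G ∈ (restrict G D (Zlist G ++ [wC G, cC G])).take i ↔ zwLength D < i := by
  rw [show Zlist G ++ [wC G, cC G] = Zlist G ++ [wC G] ++ [cC G] by simp, restrict_append,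
    restrict_cons_of_notMem D hc]
  exact List.mem_take_append_cons_iff (by simp [mem_restrict, Zlist, zC, wC, cC]) _ i

lemma wC_mem_take_zBallot (hw : wC G ∉ D) :
    wC G ∈ (restrict G D (Zlist G ++ [wC G, cC G])).take i ↔ zLength D < i := by
  rw [restrict_append, restrict_cons_of_notMem D hw]
  exact List.mem_take_append_cons_iff (by simp [mem_restrict, Zlist, zC, wC]) _ i

lemma wC_mem_take_ballot1 (hw : wC G ∉ D) (j : Fin n) :
    wC G ∈ (restrict G D (ballot1 G A j)).take i ↔ headLength A D j < i := by
  rw [show ballot1 G A j = ballotHead G A j ++ [wC G] from rfl, restrict_append,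
    restrict_cons_of_notMem D hw]
  exact List.mem_take_append_cons_iff
    (by simp [mem_restrict, ballotHead, Xlist, bC, xC, wC]) _ i

variable (A D) in
lemma length_electionD_map_restrict :
    ((electionD G A).map (restrict G D)).length = 2 * n + 1 := by
  simp [electionD]; omega

variable (A D) in
lemma levelScore_electionD_map_restrict (a : Cand G) :
    levelScore ((electionD G A).map (restrict G D)) i a =
      levelScore ((List.finRange n).map (restrict G D ∘ ballot1 G A)) i a
        + levelScore (List.replicate n (restrict G D (Ylist G ++ [cC G]))) i a
        + levelScore [restrict G D (Zlist G ++ [wC G, cC G])] i a := by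
  simp [electionD, levelScore_append, add_assoc]

lemma levelScore_map_ballot1_cC :
    levelScore ((List.finRange n).map (restrict G D ∘ ballot1 G A)) i (cC G) = 0 :=
  (levelScore_eq_zero_iff _ _ _).2 fun b hb hcb => by
    obtain ⟨j, -, rfl⟩ := List.mem_map.1 hb
    simpa [mem_restrict, ballot1, Xlist, bC, xC, wC, cC] using List.mem_of_mem_take hcb

lemma levelScore_map_ballot1_wC (hw : wC G ∉ D) :
    levelScore ((List.finRange n).map (restrict G D ∘ ballot1 G A)) i (wC G) = n ↔
      ∀ j, headLength A D j < i := by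
  simpa [wC_mem_take_ballot1 hw] using levelScore_eq_length_iff
    ((List.finRange n).map (restrict G D ∘ ballot1 G A)) i (wC G)

lemma majAt_cC_iff (hn : 0 < n) (hc : cC G ∉ D) :
    MajAt ((electionD G A).map (restrict G D)) i (cC G) ↔ yLength D < i ∧ zwLength D < i := by
  rw [MajAt, length_electionD_map_restrict, levelScore_electionD_map_restrict,
    levelScore_map_ballot1_cC, levelScore_replicate, levelScore_singleton]
  simp only [cC_mem_take_yBallot hc, cC_mem_take_zBallot hc]
  split_ifs <;> omega

lemma levelScore_cC_le :
    levelScore ((electionD G A).map (restrict G D)) i (cC G) ≤ n + 1 := by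
  rw [levelScore_electionD_map_restrict, levelScore_map_ballot1_cC, levelScore_replicate,
    levelScore_singleton]
  split_ifs <;> omega

lemma majAt_wC_iff :
    MajAt ((electionD G A).map (restrict G D)) i (wC G) ↔
      wC G ∉ D ∧ zLength D < i ∧ ∀ j, headLength A D j < i := by
  by_cases hw : wC G ∈ D
  · have hzero : levelScore ((electionD G A).map (restrict G D)) i (wC G) = 0 :=
      (levelScore_eq_zero_iff _ _ _).2 fun b hb hwb => by
        obtain ⟨l, -, rfl⟩ := List.mem_map.1 hb
        exact ((mem_restrict D).1 (List.mem_of_mem_take hwb)).2 hw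
    simp [MajAt, hzero, hw]
  have hY : wC G ∉ (restrict G D (Ylist G ++ [cC G])).take i := fun h => by
    simpa [mem_restrict, Ylist, yC, wC, cC] using List.mem_of_mem_take h
  have hfirst := levelScore_le_length ((List.finRange n).map (restrict G D ∘ ballot1 G A)) i (wC G)
  rw [List.length_map, List.length_finRange] at hfirst
  rw [MajAt, length_electionD_map_restrict, levelScore_electionD_map_restrict,
    levelScore_replicate, levelScore_singleton, if_neg hY, ← levelScore_map_ballot1_wC hw]
  simp only [wC_mem_take_zBallot hw, hw, not_false_eq_true, true_and]
  split_ifs <;> omega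

lemma score_map_ballot1_eq_zero {d : Cand G} (hd : d ∈ Ylist G ++ Zlist G) :
    score ((List.finRange n).map (ballot1 G A)) d = 0 := by
  rw [score_eq_zero_iff]
  simp only [Ylist, Zlist, List.mem_append, List.mem_map] at hd
  rcases hd with ⟨j, -, rfl⟩ | ⟨j, -, rfl⟩ <;> simp [ballot1, Xlist, bC, xC, yC, zC, wC]

lemma score_electionD_le {d : Cand G} (hdc : d ≠ cC G) (hdw : d ≠ wC G) :
    score (electionD G A) d ≤ n := by
  have hfirst := score_le_length ((List.finRange n).map (ballot1 G A)) d
  rw [List.length_map, List.length_finRange] at hfirst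
  rw [electionD, score_append, score_append, score_replicate, score_singleton]
  rcases d with b | p | j | j | _ | _
  · simp [Ylist, Zlist, yC, zC, wC, cC]; omega
  · simp [Ylist, Zlist, yC, zC, wC, cC]; omega
  · have h0 := score_map_ballot1_eq_zero (A := A) (d := yC G j) (by simp [Ylist])
    simp only [yC] at h0
    simp [h0, Ylist, Zlist, yC, zC, wC, cC]
  · have h0 := score_map_ballot1_eq_zero (A := A) (d := zC G j) (by simp [Zlist])
    simp only [zC] at h0
    simp [h0, Ylist, Zlist, yC, zC, wC, cC]
    exact Nat.one_le_iff_ne_zero.2 (by rintro rfl; exact j.elim0)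
  · exact absurd rfl hdc
  · exact absurd rfl hdw

lemma not_majAt_of_ne {d : Cand G} (hdc : d ≠ cC G) (hdw : d ≠ wC G) :
    ¬ MajAt ((electionD G A).map (restrict G D)) i d := by
  have hscore : score ((electionD G A).map (restrict G D)) d ≤ score (electionD G A) d :=
    score_map_filter_le _ d _
  have := levelScore_le_score ((electionD G A).map (restrict G D)) i d
  have := score_electionD_le (A := A) hdc hdw
  rw [MajAt, length_electionD_map_restrict]
  omega

lemma le_card_univ_sdiff (hD : D.card ≤ n) : n ≤ (Finset.univ \ D).card := by
  rw [Finset.card_univ_sdiff]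
  have : Fintype.card (Cand G) =
      n + ((∑ i : Fin n, (n - (ncl G i).card)) + ((n - 1) + ((n - 2) + 2))) := by
    simp [Fintype.card_sigma]
  omega

lemma not_uniqueFVWinner_iff (hn : 2 ≤ n) (hc : cC G ∉ D) (hD : D.card ≤ n) :
    ¬ UniqueFVWinner (Finset.univ \ D) ((electionD G A).map (restrict G D)) (cC G) ↔
      wC G ∉ D ∧ ∀ j, headLength A D j ≤ max (yLength D) (zwLength D) := by
  set L := max (yLength D) (zwLength D) + 1 with hL
  have hLn : L ≤ n := by
    have := yLength_le (D := D); have := zwLength_le (D := D) hn; omega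
  have hLCs : L ≤ (Finset.univ \ D).card := hLn.trans (le_card_univ_sdiff hD)
  have hcL : MajAt ((electionD G A).map (restrict G D)) L (cC G) :=
    (majAt_cC_iff (by omega) hc).2 ⟨by omega, by omega⟩
  constructor
  · intro hnot
    by_contra hblock
    have hfirst : ∀ j ≤ L, ∀ d, MajAt ((electionD G A).map (restrict G D)) j d →
        d = cC G ∧ j = L := by
      intro j hj d hd
      obtain rfl | hdc := eq_or_ne d (cC G)
      · have := (majAt_cC_iff (by omega) hc).1 hd
        exact ⟨rfl, by omega⟩
      obtain rfl | hdw := eq_or_ne d (wC G)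
      · obtain ⟨hw, -, hhead⟩ := majAt_wC_iff.1 hd
        exact absurd ⟨hw, fun j' => Nat.lt_succ_iff.1 ((hhead j').trans_le hj)⟩ hblock
      · exact absurd hd (not_majAt_of_ne hdc hdw)
    exact hnot (uniqueFVWinner_of_first_majority (by simpa using hc) (by omega) hLCs hcL
      (fun j hj d hd => hj.ne (hfirst j hj.le d hd).2) fun d hd => (hfirst L le_rfl d hd).1)
  · rintro ⟨hw, hhead⟩
    refine not_uniqueFVWinner_of_ties (by simpa using hw) wC_ne_cC hLCs hcL fun i hci => ?_
    obtain ⟨hy, hzw⟩ := (majAt_cC_iff (by omega) hc).1 hci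
    have hwi : MajAt ((electionD G A).map (restrict G D)) i (wC G) :=
      majAt_wC_iff.2 ⟨hw, zLength_le_zwLength.trans_lt hzw,
        fun j => (hhead j).trans_lt (max_lt hy hzw)⟩
    refine ⟨hwi, levelScore_cC_le.trans ?_⟩
    rw [MajAt, length_electionD_map_restrict] at hwi
    omega

section HeadLength

variable {j : Fin n} (hAnd : (A j).Nodup) (hAmem : ∀ b, b ∈ A j ↔ b = j ∨ G.Adj j b)
include hAnd hAmem

lemma length_ballotHead : (ballotHead G A j).length = n := by
  have hA : (A j).length = (ncl G j).card := by
    rw [← List.toFinset_card_of_nodup hAnd]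
    congr 1
    ext b
    simp [hAmem, ncl]
  have := (ncl G j).card_le_univ
  simp only [ballotHead, Xlist, List.length_append, List.length_map, List.length_finRange, hA]
  simp at this
  omega

lemma headLength_lt_iff : headLength A D j < n ↔ ∃ a ∈ ballotHead G A j, a ∈ D := by
  simpa [headLength, restrict, length_ballotHead hAnd hAmem] using
    List.length_filter_lt_length_iff_exists (l := ballotHead G A j) (p := fun a => a ∉ D)

end HeadLength

lemma mem_ballotHead_bC {v j : Fin n} : bC G v ∈ ballotHead G A j ↔ v ∈ A j := by
  simp [ballotHead, Xlist, bC, xC]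

lemma yLength_image_bC (B : Finset (Fin n)) : yLength (B.image (bC G)) = n - 1 := by
  rw [yLength, restrict_eq_self _ (by simp [Ylist, bC, yC])]
  simp [Ylist]

lemma zwLength_image_bC (hn : 2 ≤ n) (B : Finset (Fin n)) :
    zwLength (B.image (bC G)) = n - 1 := by
  rw [zwLength, restrict_eq_self _ (by simp [Zlist, bC, zC, wC])]
  simp [Zlist]
  omega

lemma exists_dominating_of_forall_exists_mem_ballotHead
    (hAmem : ∀ i b, b ∈ A i ↔ b = i ∨ G.Adj i b) (h : ∀ u, ∃ a ∈ ballotHead G A u, a ∈ D) :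
    ∃ B : Finset (Fin n), B.card ≤ D.card ∧ ∀ u, ∃ v ∈ B, u = v ∨ G.Adj v u := by
  rcases isEmpty_or_nonempty (Fin n) with hempty | ⟨⟨u₀⟩⟩
  · exact ⟨∅, by simp, fun u => isEmptyElim u⟩
  refine ⟨D.image (Sum.elim id (Sum.elim Sigma.fst fun _ => u₀)), Finset.card_image_le,
    fun u => ?_⟩
  obtain ⟨a, ha, haD⟩ := h u
  simp only [ballotHead, Xlist, List.mem_append, List.mem_map] at ha
  rcases ha with ⟨v, hv, rfl⟩ | ⟨t, -, rfl⟩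
  · refine ⟨v, Finset.mem_image_of_mem _ haD, ?_⟩
    rcases (hAmem u v).1 hv with rfl | hadj
    · exact Or.inl rfl
    · exact Or.inr hadj.symm
  · exact ⟨u, Finset.mem_image_of_mem _ haD, Or.inl rfl⟩

end DC

theorem fv_destructive_deleting_candidates_general {n k : ℕ} (hn : 3 ≤ n)
    (hkn : k ≤ n)
    (G : SimpleGraph (Fin n)) [DecidableRel G.Adj]
    (A : Fin n → List (Fin n))
    (hAnd : ∀ i, (A i).Nodup)
    (hAmem : ∀ i b, b ∈ A i ↔ (b = i ∨ G.Adj i b)) :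
    (∃ B' : Finset (Fin n), B'.card ≤ k ∧ ∀ u, ∃ v ∈ B', u = v ∨ G.Adj v u) ↔
    (∃ D : Finset (DC.Cand G), DC.cC G ∉ D ∧ D.card ≤ k ∧
      ¬ FV.UniqueFVWinner (Finset.univ \ D)
          ((DC.electionD G A).map (DC.restrict G D)) (DC.cC G)) := by
  open DC in
  constructor
  · rintro ⟨B', hB'k, hdom⟩
    have hcard : (B'.image (bC G)).card ≤ k := Finset.card_image_le.trans hB'k
    refine ⟨B'.image (bC G), by simp [bC, cC], hcard, ?_⟩
    refine (not_uniqueFVWinner_iff (by omega) (by simp [bC, cC]) (hcard.trans hkn)).2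
      ⟨by simp [bC, wC], fun j => ?_⟩
    obtain ⟨v, hv, hvj⟩ := hdom j
    have := (headLength_lt_iff (D := B'.image (bC G)) (hAnd j) (hAmem j)).2
      ⟨bC G v, mem_ballotHead_bC.2 ((hAmem j v).2 (hvj.imp Eq.symm fun h => h.symm)),
        Finset.mem_image_of_mem _ hv⟩
    rw [yLength_image_bC, zwLength_image_bC (by omega)]
    omega
  · rintro ⟨D, hc, hDk, hD⟩
    obtain ⟨-, hhead⟩ := (not_uniqueFVWinner_iff (by omega) hc (hDk.trans hkn)).1 hD
    obtain ⟨B, hBD, hdom⟩ := exists_dominating_of_forall_exists_mem_ballotHead hAmem fun u =>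
      (headLength_lt_iff (hAnd u) (hAmem u)).1 <| (hhead u).trans_lt <|
        max_lt (yLength_le.trans_lt (by omega)) ((zwLength_le (by omega)).trans_lt (by omega))
    exact ⟨B, hBD.trans hDk, hdom⟩

/-- in the deleting-candidates destructive construction, `G`
has a dominating set of size at most `k` iff `c` can be prevented from being
the unique fallback voting winner by deleting at most `k` candidates other
than `c`. -/
theorem fv_destructive_deleting_candidates {n k : ℕ} (hn : 3 ≤ n)
    (hk : 0 < k) (hkn : k ≤ n)
    (G : SimpleGraph (Fin n)) [DecidableRel G.Adj]
    (A : Fin n → List (Fin n))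
    (hAnd : ∀ i, (A i).Nodup)
    (hAmem : ∀ i b, b ∈ A i ↔ (b = i ∨ G.Adj i b)) :
    (∃ B' : Finset (Fin n), B'.card ≤ k ∧ ∀ u, ∃ v ∈ B', u = v ∨ G.Adj v u) ↔
    (∃ D : Finset (DC.Cand G), DC.cC G ∉ D ∧ D.card ≤ k ∧
      ¬ FV.UniqueFVWinner (Finset.univ \ D)
          ((DC.electionD G A).map (DC.restrict G D)) (DC.cC G)) :=
  fv_destructive_deleting_candidates_general hn hkn G A hAnd hAmem
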